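/- For any positive integer-valued random variable L with finite mean μ = E[L], the Shannon entropy satisfies H(L) < log₂(e·μ), i.e., H(L) < log₂ μ + log₂ e. -/

import Mathlib

/-!
Gibbs' inequality against the geometric distribution `q l = θ (1 - θ)^(l - 1)` on `{1, 2, …}`
bounds the entropy (in nats) by the cross-entropy `-log θ - (μ - 1) log (1 - θ)`. The choice
`θ = 1 / (μ + 1)` (rather than the optimal `1 / μ`, which degenerates at `μ = 1`) turns this into
`log μ + μ log (1 + 1 / μ)`, and `log (1 + x) < x` finishes.
-/

open Real

lemma mul_log_sub_mul_log_le {x y : ℝ} (hx : 0 ≤ x) (hy : 0 ≤ y) (hxy : y = 0 → x = 0) :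
    x * log y - x * log x ≤ y - x := by
  rcases hx.eq_or_lt with rfl | hx
  · simpa using hy
  have hy : 0 < y := hy.lt_of_ne' fun h => hx.ne' (hxy h)
  have hlog := log_le_sub_one_of_pos (div_pos hy hx)
  rw [log_div hy.ne' hx.ne'] at hlog
  calc x * log y - x * log x = x * (log y - log x) := by ring
    _ ≤ x * (y / x - 1) := by gcongr
    _ = y - x := by field_simp

theorem neg_tsum_mul_log_le_of_tsum_le {ι : Type*} {p q : ι → ℝ} (hp : ∀ i, 0 ≤ p i)
    (hq : ∀ i, 0 ≤ q i) (hpq : ∀ i, q i = 0 → p i = 0) (hp_sum : Summable p)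
    (hq_sum : Summable q) (hplogp : Summable fun i => p i * log (p i))
    (hplogq : Summable fun i => p i * log (q i)) (hqp : ∑' i, q i ≤ ∑' i, p i) :
    -∑' i, p i * log (p i) ≤ -∑' i, p i * log (q i) := by
  have h := Summable.tsum_le_tsum (fun i => mul_log_sub_mul_log_le (hp i) (hq i) (hpq i))
    (hplogq.sub hplogp) (hq_sum.sub hp_sum)
  rw [hplogq.tsum_sub hplogp, hq_sum.tsum_sub hp_sum] at h
  linarith

noncomputable def geometricPos (θ : ℝ) : ℕ → ℝ
  | 0 => 0
  | n + 1 => θ * (1 - θ) ^ n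

section geometricPos

variable {θ : ℝ}

lemma geometricPos_nonneg (h₀ : 0 ≤ θ) (h₁ : θ ≤ 1) (l : ℕ) : 0 ≤ geometricPos θ l := by
  cases l with
  | zero => exact le_rfl
  | succ n => exact mul_nonneg h₀ (pow_nonneg (sub_nonneg.2 h₁) n)

lemma geometricPos_eq_zero_iff (h₀ : 0 < θ) (h₁ : θ < 1) {l : ℕ} :
    geometricPos θ l = 0 ↔ l = 0 := by
  cases l with
  | zero => simp [geometricPos]
  | succ n => simp [geometricPos, h₀.ne', (sub_pos.2 h₁).ne']

lemma hasSum_geometricPos (h₀ : 0 < θ) (h₁ : θ ≤ 1) : HasSum (geometricPos θ) 1 := by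
  have h := (hasSum_geometric_of_lt_one (sub_nonneg.2 h₁) (sub_lt_self 1 h₀)).mul_left θ
  rw [sub_sub_cancel, mul_inv_cancel₀ h₀.ne'] at h
  simpa [geometricPos] using (hasSum_nat_add_iff (f := geometricPos θ) 1).1 h

lemma mul_log_geometricPos (h₀ : 0 < θ) (h₁ : θ < 1) {x : ℝ} {l : ℕ} (hl : l = 0 → x = 0) :
    x * log (geometricPos θ l) = log θ * x + log (1 - θ) * (l * x - x) := by
  cases l with
  | zero => simp [hl rfl]
  | succ n =>
    rw [geometricPos, log_mul h₀.ne' (pow_pos (sub_pos.2 h₁) n).ne', log_pow]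
    push_cast
    ring

end geometricPos

section entropy

variable {p : ℕ → ℝ} {μ : ℝ}

lemma one_le_of_hasSum_mean (hp : ∀ l, 0 ≤ p l) (hp0 : p 0 = 0) (hp1 : HasSum p 1)
    (hμ : HasSum (fun l : ℕ => l * p l) μ) : 1 ≤ μ := by
  refine hasSum_le (fun l => ?_) hp1 hμ
  cases l with
  | zero => simp [hp0]
  | succ n => exact le_mul_of_one_le_left (hp _) (by simp)

theorem neg_tsum_mul_log_le_of_hasSum_mean (hp : ∀ l, 0 ≤ p l) (hp0 : p 0 = 0)
    (hp1 : HasSum p 1) (hμ : HasSum (fun l : ℕ => l * p l) μ)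
    (hent : Summable fun l => p l * log (p l)) {θ : ℝ} (h₀ : 0 < θ) (h₁ : θ < 1) :
    -∑' l, p l * log (p l) ≤ -log θ - (μ - 1) * log (1 - θ) := by
  have hq := hasSum_geometricPos h₀ h₁.le
  have hcross : HasSum (fun l => p l * log (geometricPos θ l)) (log θ + log (1 - θ) * (μ - 1)) := by
    have h := (hp1.mul_left (log θ)).add ((hμ.sub hp1).mul_left (log (1 - θ)))
    rw [mul_one] at h
    exact h.congr_fun fun l => mul_log_geometricPos h₀ h₁ fun hl => hl ▸ hp0
  calc -∑' l, p l * log (p l) ≤ -∑' l, p l * log (geometricPos θ l) :=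
        neg_tsum_mul_log_le_of_tsum_le hp (geometricPos_nonneg h₀.le h₁.le)
          (fun l hl => (geometricPos_eq_zero_iff h₀ h₁).1 hl ▸ hp0) hp1.summable hq.summable hent
          hcross.summable (by rw [hq.tsum_eq, hp1.tsum_eq])
    _ = -log θ - (μ - 1) * log (1 - θ) := by rw [hcross.tsum_eq]; ring

theorem neg_tsum_mul_log_lt_one_add_log_mean (hp : ∀ l, 0 ≤ p l) (hp0 : p 0 = 0)
    (hp1 : HasSum p 1) (hμ : HasSum (fun l : ℕ => l * p l) μ)
    (hent : Summable fun l => p l * log (p l)) :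
    -∑' l, p l * log (p l) < 1 + log μ := by
  have hμ_pos : 0 < μ := one_pos.trans_le (one_le_of_hasSum_mean hp hp0 hp1 hμ)
  have hθ₀ : 0 < (μ + 1)⁻¹ := by positivity
  have hθ₁ : (μ + 1)⁻¹ < 1 := inv_lt_one_of_one_lt₀ (by linarith)
  calc -∑' l, p l * log (p l) ≤ -log (μ + 1)⁻¹ - (μ - 1) * log (1 - (μ + 1)⁻¹) :=
        neg_tsum_mul_log_le_of_hasSum_mean hp hp0 hp1 hμ hent hθ₀ hθ₁
    _ = log μ + μ * log (1 + μ⁻¹) := by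
      rw [show 1 - (μ + 1)⁻¹ = μ / (μ + 1) by field_simp; ring,
        show 1 + μ⁻¹ = (μ + 1) / μ by field_simp, log_inv,
        log_div hμ_pos.ne' (by positivity), log_div (by positivity) hμ_pos.ne']
      ring
    _ < log μ + μ * μ⁻¹ := by
      have h := log_lt_sub_one_of_pos (by positivity : 0 < 1 + μ⁻¹) (by simp [hμ_pos.ne'])
      gcongr
      linarith
    _ = 1 + log μ := by rw [mul_inv_cancel₀ hμ_pos.ne']; ring

end entropy

theorem stmt_1 (p : ℕ → ℝ) (hp : ∀ l, 0 ≤ p l) (hp0 : p 0 = 0)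
    (hpsum : Summable p) (hsum1 : ∑' l, p l = 1)
    (hmean : Summable (fun l : ℕ => (l : ℝ) * p l))
    (hent : Summable (fun l => p l * Real.logb 2 (p l))) :
    -∑' l, p l * Real.logb 2 (p l) <
      Real.logb 2 (Real.exp 1 * ∑' l : ℕ, (l : ℝ) * p l) := by
  have hlog2 : 0 < log 2 := log_pos one_lt_two
  have hp1 := hsum1 ▸ hpsum.hasSum
  have hμ_pos := one_pos.trans_le (one_le_of_hasSum_mean hp hp0 hp1 hmean.hasSum)
  have hent_nat : Summable fun l => p l * log (p l) := by
    simpa [logb, mul_div_assoc', div_mul_cancel₀ _ hlog2.ne'] using hent.mul_right (log 2)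
  simp only [logb, ← mul_div_assoc, tsum_div_const, ← neg_div]
  rw [log_mul (exp_ne_zero 1) hμ_pos.ne', log_exp, div_lt_div_iff_of_pos_right hlog2]
  exact neg_tsum_mul_log_lt_one_add_log_mean hp hp0 hp1 hmean.hasSum hent_nat
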